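/- Let n ≥ 10 be odd and let T be a tree on n vertices. Then λ2(T) ≤ √((n−3)/2), and equality holds for the caterpillar T((n−3)/2, 0, (n−3)/2) obtained from a path u v w by attaching (n−3)/2 leaves at u and (n−3)/2 leaves at w. -/

import Mathlib

open Classical
attribute [local instance] Classical.propDecidable

noncomputable section

/-- The list of eigenvalues of the adjacency matrix of `G` (with multiplicity),
sorted in ascending order. -/
def eigList {V : Type*} [Fintype V] [DecidableEq V] (G : SimpleGraph V) : List ℝ :=
  (Finset.univ.val.map (Matrix.IsHermitian.eigenvalues
    (by
      rw [Matrix.IsHermitian]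
      ext i j
      simp [Matrix.conjTranspose_apply, G.adj_comm j i] : (G.adjMatrix ℝ).IsHermitian))).sort (· ≤ ·)

/-- `lam G k` is the `k`-th largest eigenvalue (1-indexed, with multiplicity)
of the adjacency matrix of `G`; so `lam G 1 = λ₁(G)`, `lam G 2 = λ₂(G)`, etc. -/
def lam {V : Type*} [Fintype V] [DecidableEq V] (G : SimpleGraph V) (k : ℕ) : ℝ :=
  (eigList G).getD (Fintype.card V - k) 0

/-- `Phi G x = det (x I - A(G))`: the characteristic polynomial of the adjacency
matrix of `G`, evaluated at `x`. -/
def Phi {V : Type*} [Fintype V] [DecidableEq V] (G : SimpleGraph V) (x : ℝ) : ℝ :=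
  ((G.adjMatrix ℝ).charpoly).eval x

/-- The graph `G - a` obtained by deleting the vertex `a`. -/
def delVert {V : Type*} (G : SimpleGraph V) (a : V) : SimpleGraph {v : V // v ≠ a} :=
  G.induce {v : V | v ≠ a}

/-- The path graph `P_m` on `m` vertices `0 - 1 - ⋯ - (m-1)`. -/
def pathG (m : ℕ) : SimpleGraph (Fin m) :=
  SimpleGraph.fromRel (fun i j => i.val + 1 = j.val)

/-- The caterpillar `C(ℓ,r,k)`: the path `v_0 v_1 ⋯ v_{ℓ+r}` together with `k`
pendant leaves attached at the vertex `v_ℓ`. -/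
def caterpillar (l r k : ℕ) : SimpleGraph (Fin (l + r + k + 1)) :=
  SimpleGraph.fromRel (fun i j =>
    (i.val + 1 = j.val ∧ j.val ≤ l + r) ∨ (i.val = l ∧ l + r < j.val))

/-- The star `K_{1,n-1}`: vertex `0` adjacent to all other vertices. -/
def starG (n : ℕ) : SimpleGraph (Fin n) :=
  SimpleGraph.fromRel (fun i _ => i.val = 0)

/-- The double star `T(n-3,1)`: adjacent vertices `u = 0`, `v = 1`, where `u` has
the `n - 3` pendant leaves `2, …, n-2` and `v` has the single pendant leaf `n-1`. -/
def doubleStar (n : ℕ) : SimpleGraph (Fin n) :=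
  SimpleGraph.fromRel (fun i j =>
    (i.val = 0 ∧ 1 ≤ j.val ∧ j.val ≤ n - 2) ∨ (i.val = 1 ∧ j.val = n - 1))

/-- The caterpillar `T((n-3)/2, 0, (n-3)/2)`: a path `0 - 1 - 2` with `(n-3)/2`
pendant leaves attached at `0` and `(n-3)/2` pendant leaves attached at `2`. -/
def doubleBroom (n : ℕ) : SimpleGraph (Fin n) :=
  SimpleGraph.fromRel (fun i j =>
    (i.val = 0 ∧ j.val = 1) ∨ (i.val = 1 ∧ j.val = 2) ∨
    (i.val = 0 ∧ 3 ≤ j.val ∧ j.val < 3 + (n - 3) / 2) ∨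
    (i.val = 2 ∧ 3 + (n - 3) / 2 ≤ j.val))

/-- `(G1,a) ∘ (G2,b)`: the disjoint union of `G1` and `G2` together with the edge `ab`. -/
def connectRoots {V1 V2 : Type*} (G1 : SimpleGraph V1) (G2 : SimpleGraph V2) (a : V1) (b : V2) :
    SimpleGraph (V1 ⊕ V2) where
  Adj x y := match x, y with
    | .inl u, .inl v => G1.Adj u v
    | .inr u, .inr v => G2.Adj u v
    | .inl u, .inr v => u = a ∧ v = b
    | .inr u, .inl v => u = b ∧ v = a
  symm := by
    refine ⟨?_⟩
    rintro (u | u) (v | v) h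
    · exact G1.adj_symm h
    · exact ⟨h.2, h.1⟩
    · exact ⟨h.2, h.1⟩
    · exact G2.adj_symm h
  loopless := by
    refine ⟨?_⟩
    rintro (u | u) h
    · exact G1.irrefl h
    · exact G2.irrefl h

/-- `(G1,a) ∘ v ∘ (G2,b)`: the disjoint union of `G1` and `G2` together with a new
vertex (`none`) joined to exactly `a` and `b`. -/
def connectViaVertex {V1 V2 : Type*} (G1 : SimpleGraph V1) (G2 : SimpleGraph V2)
    (a : V1) (b : V2) : SimpleGraph (Option (V1 ⊕ V2)) where
  Adj x y := match x, y with
    | some (.inl u), some (.inl v) => G1.Adj u v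
    | some (.inr u), some (.inr v) => G2.Adj u v
    | none, some (.inl u) => u = a
    | some (.inl u), none => u = a
    | none, some (.inr u) => u = b
    | some (.inr u), none => u = b
    | _, _ => False
  symm := by
    refine ⟨?_⟩
    rintro (_ | (u | u)) (_ | (v | v)) h
    all_goals first
      | exact h.elim
      | exact h
      | exact G1.adj_symm h
      | exact G2.adj_symm h
  loopless := by
    refine ⟨?_⟩
    rintro (_ | (u | u)) h
    · exact h.elim
    · exact G1.irrefl h
    · exact G2.irrefl h

/-!
Let `v` be a centroid of the tree, so that every branch of `T` at `v` has at most `⌊n/2⌋`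
vertices. Some nonzero combination of eigenvectors for `λ₁` and `λ₂` vanishes at `v`, so `λ₂(T)` is
at most the largest Rayleigh quotient of the adjacency matrix `B` of `T - v`. In a forest the walks of
length two from `u` inject into the component of `u` minus `u`, so the row sums of `B²` are at most
`⌊n/2⌋ - 1`; Schur's test and Cauchy–Schwarz then give `λ₂(T) ≤ √(⌊n/2⌋ - 1)`.

The caterpillar `T(k, 0, k)` is a blow-up of the path `P₅`; vectors constant on the blown-up
classes reduce its spectral computations to `5 × 5` ones. Deleting the middle vertex leaves two
stars `K_{1,k}`, and lifting eigenvectors of the quotient gives the eigenvalues `√k` and `√(k + 2)`.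
-/

open Finset Matrix SimpleGraph

namespace Matrix

variable {n : Type*} [Fintype n]

lemma dotProduct_mulVec_le_of_mulVec_one_le {M : Matrix n n ℝ} (hM : M.IsSymm)
    (h0 : ∀ i j, 0 ≤ M i j) {r : ℝ} (hr : ∀ i, (M *ᵥ 1) i ≤ r) (x : n → ℝ) :
    x ⬝ᵥ M *ᵥ x ≤ r * (x ⬝ᵥ x) := by
  have hsym : ∑ i, ∑ j, M i j * x j ^ 2 = ∑ i, ∑ j, M i j * x i ^ 2 := by
    rw [sum_comm]
    simp_rw [hM.apply]
  calc x ⬝ᵥ M *ᵥ x = ∑ i, ∑ j, M i j * (x i * x j) := by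
        simp only [dotProduct, mulVec, mul_sum]
        exact sum_congr rfl fun i _ => sum_congr rfl fun j _ => by ring
    _ ≤ ∑ i, ∑ j, M i j * ((x i ^ 2 + x j ^ 2) / 2) := by
        gcongr with i _ j _
        · exact h0 i j
        · nlinarith [sq_nonneg (x i - x j)]
    _ = (∑ i, ∑ j, M i j * x i ^ 2 + ∑ i, ∑ j, M i j * x j ^ 2) / 2 := by
        rw [← sum_add_distrib, sum_div]
        refine sum_congr rfl fun i _ => ?_
        rw [← sum_add_distrib, sum_div]
        exact sum_congr rfl fun j _ => by ring
    _ = ∑ i, (∑ j, M i j) * x i ^ 2 := by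
        simp only [hsym, add_self_div_two, sum_mul]
    _ ≤ ∑ i, r * x i ^ 2 := by
        gcongr with i
        simpa [mulVec, dotProduct] using hr i
    _ = r * (x ⬝ᵥ x) := by simp only [dotProduct, mul_sum, sq]

lemma dotProduct_mulVec_le_sqrt_of_mul_self {B : Matrix n n ℝ} (hB : B.IsSymm) {r : ℝ}
    (hr : ∀ x, x ⬝ᵥ (B * B) *ᵥ x ≤ r * (x ⬝ᵥ x)) (x : n → ℝ) :
    x ⬝ᵥ B *ᵥ x ≤ √r * (x ⬝ᵥ x) := by
  have hxx : 0 ≤ x ⬝ᵥ x := sum_nonneg fun i _ => mul_self_nonneg (x i)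
  have hBx : (B *ᵥ x) ⬝ᵥ (B *ᵥ x) = x ⬝ᵥ (B * B) *ᵥ x := by
    rw [← mulVec_mulVec, dotProduct_mulVec, ← mulVec_transpose, hB.eq, dotProduct_comm]
  have hcs : (x ⬝ᵥ B *ᵥ x) ^ 2 ≤ r * (x ⬝ᵥ x) ^ 2 := by
    calc (x ⬝ᵥ B *ᵥ x) ^ 2 ≤ (x ⬝ᵥ x) * ((B *ᵥ x) ⬝ᵥ (B *ᵥ x)) := by
          simpa [dotProduct, sq] using sum_mul_sq_le_sq_mul_sq univ x (B *ᵥ x)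
      _ ≤ (x ⬝ᵥ x) * (r * (x ⬝ᵥ x)) := by rw [hBx]; gcongr; exact hr x
      _ = r * (x ⬝ᵥ x) ^ 2 := by ring
  calc x ⬝ᵥ B *ᵥ x ≤ √((x ⬝ᵥ B *ᵥ x) ^ 2) :=
        (le_abs_self _).trans_eq (Real.sqrt_sq_eq_abs _).symm
    _ ≤ √(r * (x ⬝ᵥ x) ^ 2) := Real.sqrt_le_sqrt hcs
    _ = √r * (x ⬝ᵥ x) := by rw [Real.sqrt_mul' _ (sq_nonneg _), Real.sqrt_sq hxx]

namespace IsHermitian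

variable [DecidableEq n] {A : Matrix n n ℝ} (hA : A.IsHermitian)
include hA

lemma eigenvalues_equivOfCardEq (k : Fin (Fintype.card n)) :
    hA.eigenvalues (Fintype.equivOfCardEq (Fintype.card_fin _) k) = hA.eigenvalues₀ k := by
  simp [eigenvalues]

lemma sort_eigenvalues :
    (univ.val.map hA.eigenvalues).sort (· ≤ ·) = (List.ofFn hA.eigenvalues₀).reverse := by
  refine List.Perm.eq_of_sortedLE ?_ (hA.eigenvalues₀_antitone.sortedGE_ofFn.reverse) ?_
  · exact List.sortedLE_iff_pairwise.2 (Multiset.pairwise_sort _ _)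
  · rw [← Multiset.coe_eq_coe, Multiset.sort_eq, Multiset.coe_reverse, ← Fin.univ_val_map,
      ← Multiset.map_univ_val_equiv (Fintype.equivOfCardEq (Fintype.card_fin _)), Multiset.map_map]
    simp only [Function.comp_def, eigenvalues_equivOfCardEq]

lemma dotProduct_eigenvectorBasis (i j : n) :
    ⇑(hA.eigenvectorBasis i) ⬝ᵥ ⇑(hA.eigenvectorBasis j) = if i = j then 1 else 0 := by
  rw [dotProduct_comm, ← star_trivial (⇑(hA.eigenvectorBasis i)),
    ← EuclideanSpace.inner_eq_star_dotProduct]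
  exact orthonormal_iff_ite.1 hA.eigenvectorBasis.orthonormal i j

lemma eigenvalues₀_one_le_of_dotProduct_mulVec_le (h2 : 2 ≤ Fintype.card n) (v : n) {c : ℝ}
    (hc : ∀ x : n → ℝ, x v = 0 → x ⬝ᵥ A *ᵥ x ≤ c * (x ⬝ᵥ x)) :
    hA.eigenvalues₀ ⟨1, h2⟩ ≤ c := by
  set e := Fintype.equivOfCardEq (α := Fin (Fintype.card n)) (Fintype.card_fin _)
  set i := e ⟨0, by omega⟩
  set j := e ⟨1, h2⟩
  set u := ⇑(hA.eigenvectorBasis i)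
  set w := ⇑(hA.eigenvectorBasis j)
  have hij : i ≠ j := by simp [i, j]
  have hi : hA.eigenvalues₀ ⟨1, h2⟩ ≤ hA.eigenvalues i := by
    rw [eigenvalues_equivOfCardEq]
    exact hA.eigenvalues₀_antitone (Fin.mk_le_mk.2 zero_le_one)
  have hj : hA.eigenvalues j = hA.eigenvalues₀ ⟨1, h2⟩ := eigenvalues_equivOfCardEq hA _
  -- a nonzero combination of the two top eigenvectors that vanishes at `v`
  obtain ⟨α, β, hαβ, hv⟩ : ∃ α β : ℝ, 0 < α ^ 2 + β ^ 2 ∧ α * u v + β * w v = 0 := by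
    by_cases hu : u v = 0
    · exact ⟨1, 0, by norm_num, by simp [hu]⟩
    · exact ⟨w v, -u v, by rw [neg_sq]; positivity, by ring⟩
  set x := α • u + β • w
  have hxx : x ⬝ᵥ x = α ^ 2 + β ^ 2 := by
    simp only [x, u, w, dotProduct_add, add_dotProduct, dotProduct_smul, smul_dotProduct,
      dotProduct_eigenvectorBasis, hij, hij.symm, if_true, if_false, smul_eq_mul]
    ring
  have hxAx : x ⬝ᵥ A *ᵥ x = α ^ 2 * hA.eigenvalues i + β ^ 2 * hA.eigenvalues j := by
    simp only [x, u, w, mulVec_add, mulVec_smul, mulVec_eigenvectorBasis, dotProduct_add,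
      add_dotProduct, dotProduct_smul, smul_dotProduct, dotProduct_eigenvectorBasis, hij, hij.symm,
      if_true, if_false, smul_eq_mul]
    ring
  have hcx := hc x (by simpa [x] using hv)
  rw [hxx, hxAx, hj] at hcx
  refine le_of_mul_le_mul_right ?_ hαβ
  nlinarith [mul_le_mul_of_nonneg_left hi (sq_nonneg α)]

lemma le_eigenvalues₀_one_of_ne (h2 : 2 ≤ Fintype.card n) {a : ℝ} {i j : n} (hij : i ≠ j)
    (hi : a ≤ hA.eigenvalues i) (hj : a ≤ hA.eigenvalues j) :
    a ≤ hA.eigenvalues₀ ⟨1, h2⟩ := by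
  set e := Fintype.equivOfCardEq (α := Fin (Fintype.card n)) (Fintype.card_fin _)
  obtain ⟨k, hk, hak⟩ : ∃ k : Fin (Fintype.card n), 1 ≤ k.val ∧ a ≤ hA.eigenvalues₀ k := by
    rw [← e.apply_symm_apply i, eigenvalues_equivOfCardEq] at hi
    rw [← e.apply_symm_apply j, eigenvalues_equivOfCardEq] at hj
    by_cases h0 : (e.symm i).val = 0
    · refine ⟨e.symm j, ?_, hj⟩
      have : e.symm i ≠ e.symm j := e.symm.injective.ne hij
      omega
    · exact ⟨e.symm i, by omega, hi⟩
  exact hak.trans (hA.eigenvalues₀_antitone (Fin.mk_le_mk.2 hk))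

lemma mem_range_eigenvalues_of_mulVec_eq_smul {μ : ℝ} {y : n → ℝ} (hy : y ≠ 0)
    (h : A *ᵥ y = μ • y) : μ ∈ Set.range hA.eigenvalues := by
  rw [← hA.spectrum_real_eq_range_eigenvalues, ← Matrix.spectrum_toLin',
    ← Module.End.hasEigenvalue_iff_mem_spectrum]
  exact Module.End.hasEigenvalue_of_hasEigenvector ⟨Module.End.mem_eigenspace_iff.2 (by simpa), hy⟩

end IsHermitian

end Matrix

namespace SimpleGraph

section Acyclic

variable {V : Type*} {G : SimpleGraph V}

lemma IsAcyclic.not_adj_of_adj_of_adj (hG : G.IsAcyclic) {a t c : V} (hat : G.Adj a t)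
    (htc : G.Adj t c) : ¬ G.Adj a c := fun hac => by
  have hp : (Walk.cons hat (Walk.cons htc Walk.nil)).IsPath := by
    simp [Walk.cons_isPath_iff, hat.ne, htc.ne, hac.ne]
  exact htc.ne (hG.eq_snd_of_adj_start hp hac (by simp)).symm

lemma IsAcyclic.eq_of_adj_of_adj (hG : G.IsAcyclic) {a c t t' : V} (hac : a ≠ c)
    (hat : G.Adj a t) (htc : G.Adj t c) (hat' : G.Adj a t') (ht'c : G.Adj t' c) : t = t' := by
  have hp : (Walk.cons hat (Walk.cons htc Walk.nil)).IsPath := by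
    simp [Walk.cons_isPath_iff, hat.ne, htc.ne, hac]
  have hq : (Walk.cons hat' (Walk.cons ht'c Walk.nil)).IsPath := by
    simp [Walk.cons_isPath_iff, hat'.ne, ht'c.ne, hac]
  simpa using congrArg (fun p : G.Path a c => p.1.snd)
    ((hG.subsingleton_path a c).elim ⟨_, hp⟩ ⟨_, hq⟩)

lemma IsAcyclic.sum_degree_neighborFinset_lt_card [Fintype V] [DecidableRel G.Adj]
    (hG : G.IsAcyclic) {u : V} {s : Finset V} (hs : ∀ w, G.Reachable u w → w ∈ s) :
    ∑ t ∈ G.neighborFinset u, G.degree t < #s := by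
  simp only [← card_neighborFinset_eq_degree]
  rw [← card_sigma, ← card_erase_add_one (hs u .rfl), Nat.lt_succ_iff]
  -- the walk `u t j` goes to `t` if it returns to `u`, and to `j` otherwise
  refine card_le_card_of_injOn (fun p => if p.2 = u then p.1 else p.2) ?_ ?_
  · rintro ⟨t, j⟩ h
    simp only [coe_sigma, Set.mem_sigma_iff, mem_coe, mem_neighborFinset] at h
    simp only [mem_coe, mem_erase]
    split_ifs with hj
    · exact ⟨h.1.ne', hs _ h.1.reachable⟩
    · exact ⟨hj, hs _ (h.1.reachable.trans h.2.reachable)⟩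
  · rintro ⟨t, j⟩ h ⟨t', j'⟩ h' he
    simp only [coe_sigma, Set.mem_sigma_iff, mem_coe, mem_neighborFinset] at h h'
    by_cases hj : j = u <;> by_cases hj' : j' = u <;> simp only [hj, hj', if_true, if_false] at he
    · subst he hj hj'; rfl
    · subst he hj; exact (hG.not_adj_of_adj_of_adj h'.1 h'.2 h.1).elim
    · subst he hj'; exact (hG.not_adj_of_adj_of_adj h.1 h.2 h'.1).elim
    · subst he
      obtain rfl := hG.eq_of_adj_of_adj (Ne.symm hj) h.1 h.2 h'.1 h'.2
      rfl

end Acyclic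

section Branch

variable {V : Type*} {G : SimpleGraph V}

lemma reachable_deleteIncidenceSet_of_notMem_support {v a w : V} (p : G.Walk a w)
    (hv : v ∉ p.support) : (G.deleteIncidenceSet v).Reachable a w :=
  ⟨p.toDeleteEdges _ fun _ he hinc => hv (Walk.mem_support_of_mem_edges he hinc.2)⟩

lemma eq_of_reachable_deleteIncidenceSet {v u : V} (h : (G.deleteIncidenceSet v).Reachable u v) :
    u = v := by
  obtain ⟨p⟩ := h.symm
  cases p with
  | nil => rfl
  | cons h _ => exact absurd rfl (deleteIncidenceSet_adj.1 h).2.1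

variable [Fintype V]

def branch (G : SimpleGraph V) (v u : V) : Finset V :=
  {w | (G.deleteIncidenceSet v).Reachable u w}

@[simp]
lemma mem_branch {v u w : V} : w ∈ G.branch v u ↔ (G.deleteIncidenceSet v).Reachable u w := by
  simp [branch]

lemma mem_branch_self (v u : V) : u ∈ G.branch v u := by simp

lemma branch_eq_of_reachable {v u u' : V} (h : (G.deleteIncidenceSet v).Reachable u u') :
    G.branch v u = G.branch v u' := by
  ext w
  simp only [mem_branch]
  exact ⟨h.symm.trans, h.trans⟩

lemma Connected.exists_adj_branch_eq (hG : G.Connected) {v u : V} (huv : u ≠ v) :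
    ∃ b, G.Adj v b ∧ G.branch v u = G.branch v b := by
  obtain ⟨p, hp⟩ := (hG v u).exists_isPath
  cases p with
  | nil => exact absurd rfl huv
  | cons h q =>
    refine ⟨_, h, branch_eq_of_reachable ?_⟩
    exact (reachable_deleteIncidenceSet_of_notMem_support q
      (Walk.cons_isPath_iff h q |>.1 hp).2).symm

lemma IsAcyclic.disjoint_branch (hG : G.IsAcyclic) {v b : V} (h : G.Adj v b) :
    Disjoint (G.branch v b) (G.branch b v) := by
  rw [Finset.disjoint_left]
  intro w hwb hwv
  have hle : ∀ x ∈ ({v, b} : Set V), G.deleteIncidenceSet x ≤ G.deleteEdges {s(v, b)} :=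
    fun x hx => deleteEdges_anti (by simpa [incidenceSet, Set.subset_def, h] using hx)
  exact isAcyclic_iff_forall_adj_isBridge.1 hG h
    (((mem_branch.1 hwv).mono (hle b (by simp))).trans
      ((mem_branch.1 hwb).mono (hle v (by simp))).symm)

lemma branch_subset_erase_branch {v b b' : V} (h : G.Adj v b) (hb' : G.Adj b b')
    (hv : v ∉ G.branch b b') : G.branch b b' ⊆ (G.branch v b).erase b := by
  intro w hw
  obtain ⟨p⟩ := mem_branch.1 hw
  have hvp : v ∉ (p.mapLe (deleteIncidenceSet_le G b)).support := by
    rw [Walk.support_mapLe_eq_support]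
    exact fun hvp => hv (mem_branch.2 ⟨p.takeUntil v hvp⟩)
  have hb'v : b' ≠ v := fun hb'v => hv (hb'v ▸ mem_branch_self b b')
  refine mem_erase.2 ⟨fun hwb => hb'.ne
    (eq_of_reachable_deleteIncidenceSet (v := b) (hwb ▸ p.reachable)).symm, ?_⟩
  exact mem_branch.2 ((deleteIncidenceSet_adj.2 ⟨hb', h.ne', hb'v⟩).reachable.trans
    (reachable_deleteIncidenceSet_of_notMem_support _ hvp))

theorem IsTree.exists_forall_two_mul_card_branch_le (hG : G.IsTree) :
    ∃ v, ∀ u ≠ v, 2 * #(G.branch v u) ≤ Fintype.card V := by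
  have : Nonempty V := hG.connected.nonempty
  -- a vertex minimising the size of its largest branch
  obtain ⟨v, -, hv⟩ := exists_min_image univ
    (fun v => (univ.erase v).sup fun u => #(G.branch v u)) univ_nonempty
  refine ⟨v, fun u huv => not_lt.1 fun hu => ?_⟩
  obtain ⟨b, hvb, hub⟩ := hG.connected.exists_adj_branch_eq huv
  rw [hub] at hu
  have hbB : b ∈ G.branch v b := mem_branch_self v b
  have hlt : ((univ.erase b).sup fun u => #(G.branch b u)) < #(G.branch v b) := by
    refine (Finset.sup_lt_iff (card_pos.2 ⟨b, hbB⟩)).2 fun u' hu' => ?_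
    obtain ⟨b', hbb', hu'b⟩ := hG.connected.exists_adj_branch_eq (ne_of_mem_erase hu')
    rw [hu'b]
    by_cases hvb' : v ∈ G.branch b b'
    · rw [branch_eq_of_reachable (mem_branch.1 hvb')]
      have := card_union_of_disjoint (hG.isAcyclic.disjoint_branch hvb)
      have := card_le_univ (G.branch v b ∪ G.branch b v)
      omega
    · have := card_le_card (branch_subset_erase_branch hvb hbb' hvb')
      rw [card_erase_of_mem hbB] at this
      have := card_pos.2 ⟨b, hbB⟩
      omega
  have := hv b (mem_univ b)
  have := le_sup (f := fun u => #(G.branch v u)) (mem_erase.2 ⟨Ne.symm hvb.ne, mem_univ b⟩)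
  omega

end Branch

section Spectrum

variable {V : Type*} [Fintype V]

lemma adjMatrix_mulVec_adjMatrix_mulVec_one (G : SimpleGraph V) [DecidableRel G.Adj] (u : V) :
    (G.adjMatrix ℝ *ᵥ (G.adjMatrix ℝ *ᵥ 1)) u = ∑ t ∈ G.neighborFinset u, (G.degree t : ℝ) := by
  simp

variable [DecidableEq V]

lemma dotProduct_mulVec_adjMatrix_deleteIncidenceSet (G : SimpleGraph V) {v : V} {x : V → ℝ}
    (hx : x v = 0) :
    x ⬝ᵥ (G.deleteIncidenceSet v).adjMatrix ℝ *ᵥ x = x ⬝ᵥ G.adjMatrix ℝ *ᵥ x := by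
  simp only [dotProduct_mulVec_adjMatrix, deleteIncidenceSet_adj]
  refine sum_congr rfl fun i _ => sum_congr rfl fun j _ => ?_
  by_cases hi : i = v
  · simp [hi, hx]
  by_cases hj : j = v
  · simp [hj, hx]
  simp [hi, hj]

lemma lam_eq_eigenvalues₀ (G : SimpleGraph V) {k : ℕ} (hk : k < Fintype.card V) :
    lam G (k + 1) = (G.isHermitian_adjMatrix ℝ).eigenvalues₀ ⟨k, hk⟩ := by
  rw [lam, eigList, Matrix.IsHermitian.sort_eigenvalues,
    List.getD_eq_getElem _ _ (by simp; omega)]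
  simp only [List.getElem_reverse, List.getElem_ofFn, List.length_ofFn]
  congr 2
  omega

theorem lam_two_le_sqrt_of_deleteIncidenceSet (G : SimpleGraph V) (h2 : 2 ≤ Fintype.card V)
    (v : V) {r : ℝ} (hr : ∀ u, ((G.deleteIncidenceSet v).adjMatrix ℝ *ᵥ
      ((G.deleteIncidenceSet v).adjMatrix ℝ *ᵥ 1)) u ≤ r) :
    lam G 2 ≤ √r := by
  set B := (G.deleteIncidenceSet v).adjMatrix ℝ
  have hB : B.IsSymm := isSymm_adjMatrix _
  have hBB : (B * B).IsSymm := by simpa only [hB.eq] using isSymm_transpose_mul_self B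
  have hBB0 : ∀ i j, 0 ≤ (B * B) i j := fun i j => by
    rw [adjMatrix_mul_apply]
    exact sum_nonneg fun t _ => by simp only [B, adjMatrix_apply]; split_ifs <;> norm_num
  rw [lam_eq_eigenvalues₀ G (k := 1) h2]
  refine (G.isHermitian_adjMatrix ℝ).eigenvalues₀_one_le_of_dotProduct_mulVec_le h2 v
    fun x hx => ?_
  rw [← dotProduct_mulVec_adjMatrix_deleteIncidenceSet G hx]
  refine dotProduct_mulVec_le_sqrt_of_mul_self hB (fun y =>
    dotProduct_mulVec_le_of_mulVec_one_le hBB hBB0 (fun i => ?_) y) x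
  rw [← mulVec_mulVec]
  exact hr i

theorem IsTree.lam_two_le {G : SimpleGraph V} (hG : G.IsTree) (h2 : 2 ≤ Fintype.card V) :
    lam G 2 ≤ √(Fintype.card V / 2 - 1 : ℕ) := by
  obtain ⟨v, hv⟩ := hG.exists_forall_two_mul_card_branch_le
  refine lam_two_le_sqrt_of_deleteIncidenceSet G h2 v fun u => ?_
  rw [adjMatrix_mulVec_adjMatrix_mulVec_one, ← Nat.cast_sum]
  have hwalks := (hG.isAcyclic.anti (deleteIncidenceSet_le G v)).sum_degree_neighborFinset_lt_card
    (u := u) (s := G.branch v u) fun w hw => mem_branch.2 hw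
  have hbranch : #(G.branch v u) ≤ Fintype.card V / 2 := by
    by_cases huv : u = v
    · subst huv
      have : #(G.branch u u) ≤ 1 := card_le_one.2 fun a ha b hb =>
        (eq_of_reachable_deleteIncidenceSet (mem_branch.1 ha).symm).trans
          (eq_of_reachable_deleteIncidenceSet (mem_branch.1 hb).symm).symm
      omega
    · have := hv u huv
      omega
  exact_mod_cast (show _ ≤ Fintype.card V / 2 - 1 by omega)

end Spectrum

section BlowUp

variable {V W : Type*} [Fintype V] [Fintype W] [DecidableEq W]

lemma adjMatrix_mulVec_comp_of_adj_iff {G : SimpleGraph V} [DecidableRel G.Adj]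
    {H : SimpleGraph W} [DecidableRel H.Adj] {π : V → W}
    (hG : ∀ a b, G.Adj a b ↔ H.Adj (π a) (π b)) (f : W → ℝ) :
    G.adjMatrix ℝ *ᵥ (f ∘ π) = (H.adjMatrix ℝ *ᵥ fun d => #{w | π w = d} * f d) ∘ π := by
  ext u
  simp only [mulVec, dotProduct, adjMatrix_apply, hG, Function.comp_apply]
  rw [← sum_fiberwise' univ π fun d => (if H.Adj (π u) d then (1 : ℝ) else 0) * f d]
  refine sum_congr rfl fun d _ => ?_
  rw [sum_const, nsmul_eq_mul]
  ring

end BlowUp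

lemma deleteIncidenceSet_adj_iff_of_adj_iff {V W : Type*} {G : SimpleGraph V}
    {H : SimpleGraph W} {π : V → W} (hG : ∀ a b, G.Adj a b ↔ H.Adj (π a) (π b)) {v : V}
    (hv : ∀ a, π a = π v → a = v) (a b : V) :
    (G.deleteIncidenceSet v).Adj a b ↔ (H.deleteIncidenceSet (π v)).Adj (π a) (π b) := by
  simp only [deleteIncidenceSet_adj, hG]
  exact and_congr_right' (and_congr (not_congr ⟨congrArg π, hv a⟩) (not_congr ⟨congrArg π, hv b⟩))

end SimpleGraph

/-- `doubleBroom n` is the pull-back of the path `0 - 1 - 2 - 3 - 4` along this map: the leaves at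
vertex `0` go to `0`, the vertices `0, 1, 2` to `1, 2, 3`, and the leaves at vertex `2` to `4`. -/
def broomClass (n : ℕ) (j : Fin n) : Fin 5 :=
  if h : j.val < 3 then ⟨j.val + 1, by omega⟩ else if j.val < 3 + (n - 3) / 2 then 0 else 4

lemma broomClass_eq_iff (n : ℕ) (j : Fin n) (d : Fin 5) : broomClass n j = d ↔
    (j.val < 3 ∧ d.val = j.val + 1) ∨ (3 ≤ j.val ∧ j.val < 3 + (n - 3) / 2 ∧ d.val = 0) ∨
      (3 + (n - 3) / 2 ≤ j.val ∧ d.val = 4) := by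
  unfold broomClass
  split_ifs <;> rw [Fin.ext_iff] <;> simp <;> omega

lemma doubleBroom_adj_iff {n : ℕ} (i j : Fin n) :
    (doubleBroom n).Adj i j ↔ (pathGraph 5).Adj (broomClass n i) (broomClass n j) := by
  simp only [doubleBroom, fromRel_adj, pathGraph_adj, broomClass, ne_eq, Fin.ext_iff]
  split_ifs <;> simp <;> omega

lemma card_broomClass_eq (k : ℕ) (hk : 1 ≤ k) (d : Fin 5) :
    #{j | broomClass (2 * k + 3) j = d} = ![k, 1, 1, 1, k] d := by
  have hIcc : ∀ a b : Fin (2 * k + 3), (∀ j, broomClass _ j = d ↔ a ≤ j ∧ j ≤ b) →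
      #{j | broomClass (2 * k + 3) j = d} = b + 1 - a := fun a b h => by
    rw [← Fin.card_Icc]
    congr 1
    ext j
    simp [h]
  have hk' : (2 * k + 3 - 3) / 2 = k := by omega
  fin_cases d <;> [
    refine (hIcc ⟨3, by omega⟩ ⟨2 + k, by omega⟩ fun j => ?_).trans (by simp);
    refine (hIcc ⟨0, by omega⟩ ⟨0, by omega⟩ fun j => ?_).trans (by simp);
    refine (hIcc ⟨1, by omega⟩ ⟨1, by omega⟩ fun j => ?_).trans (by simp);
    refine (hIcc ⟨2, by omega⟩ ⟨2, by omega⟩ fun j => ?_).trans (by simp);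
    refine (hIcc ⟨3 + k, by omega⟩ ⟨2 * k + 2, by omega⟩ fun j => ?_).trans (by simp; omega)] <;>
  simp only [broomClass_eq_iff, Fin.le_def, hk', and_true] <;> omega

lemma lam_two_doubleBroom_le (k : ℕ) (hk : 1 ≤ k) : lam (doubleBroom (2 * k + 3)) 2 ≤ √k := by
  have hdel : ∀ a b, ((doubleBroom (2 * k + 3)).deleteIncidenceSet ⟨1, by omega⟩).Adj a b ↔
      ((pathGraph 5).deleteIncidenceSet 2).Adj (broomClass _ a) (broomClass _ b) :=
    deleteIncidenceSet_adj_iff_of_adj_iff doubleBroom_adj_iff fun a ha => Fin.ext (by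
      rw [show broomClass (2 * k + 3) ⟨1, _⟩ = 2 from rfl, broomClass_eq_iff] at ha
      simp at ha
      show a.val = 1
      omega)
  refine lam_two_le_sqrt_of_deleteIncidenceSet _ (by simp) ⟨1, by omega⟩ fun u => ?_
  rw [show (1 : Fin (2 * k + 3) → ℝ) = (fun _ => 1) ∘ broomClass (2 * k + 3) from rfl,
    adjMatrix_mulVec_comp_of_adj_iff hdel, adjMatrix_mulVec_comp_of_adj_iff hdel]
  simp only [Function.comp_apply, card_broomClass_eq k hk]
  generalize broomClass (2 * k + 3) u = d
  fin_cases d <;> simp [mulVec, dotProduct, Fin.sum_univ_five, deleteIncidenceSet_adj, pathGraph_adj]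

lemma le_lam_two_doubleBroom (k : ℕ) (hk : 1 ≤ k) : √k ≤ lam (doubleBroom (2 * k + 3)) 2 := by
  have hs : ∀ d, (#{w | broomClass (2 * k + 3) w = d} : ℝ) = ![(k : ℝ), 1, 1, 1, k] d := fun d => by
    rw [card_broomClass_eq k hk]; fin_cases d <;> simp
  have hA := (doubleBroom (2 * k + 3)).isHermitian_adjMatrix ℝ
  have heig : ∀ (f : Fin 5 → ℝ) (μ : ℝ),
      (pathGraph 5).adjMatrix ℝ *ᵥ (fun d => #{w | broomClass (2 * k + 3) w = d} * f d) = μ • f →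
      f 1 ≠ 0 → μ ∈ Set.range hA.eigenvalues := fun f μ hf hf1 => by
    refine hA.mem_range_eigenvalues_of_mulVec_eq_smul (y := f ∘ broomClass (2 * k + 3))
      (fun h => hf1 ?_) ?_
    · simpa [broomClass] using congrFun h ⟨0, by omega⟩
    · rw [adjMatrix_mulVec_comp_of_adj_iff doubleBroom_adj_iff]
      exact congrArg (· ∘ broomClass (2 * k + 3)) hf
  have hsq : √k * √k = k := Real.mul_self_sqrt (Nat.cast_nonneg k)
  have hsq2 : √(k + 2) * √(k + 2) = k + 2 := Real.mul_self_sqrt (by positivity)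
  obtain ⟨i, hi⟩ := heig ![1, √k, 0, -√k, -1] √k (by
      ext d; fin_cases d <;> simp [hs, mulVec, dotProduct, Fin.sum_univ_five, pathGraph_adj, hsq])
    (by simp [Nat.one_le_iff_ne_zero.1 hk])
  obtain ⟨j, hj⟩ := heig ![1, √(k + 2), 2, √(k + 2), 1] √(k + 2) (by
      ext d; fin_cases d <;> simp [hs, mulVec, dotProduct, Fin.sum_univ_five, pathGraph_adj] <;>
        nlinarith)
    (by simp; positivity)
  have hlt : √k < √(k + 2) := Real.sqrt_lt_sqrt (Nat.cast_nonneg k) (by linarith)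
  rw [lam_eq_eigenvalues₀ _ (k := 1) (by simp)]
  exact hA.le_eigenvalues₀_one_of_ne _ (fun hij => hlt.ne (by rw [← hi, ← hj, hij])) hi.ge
    (hj ▸ hlt.le)

/-- For odd `n ≥ 10` and any tree `T` on `n` vertices, `λ₂(T) ≤ √((n−3)/2)`;
equality holds for the caterpillar `T((n−3)/2, 0, (n−3)/2)`. -/
theorem stmt_18 {n : ℕ} (hn : 10 ≤ n) (hodd : Odd n)
    (T : SimpleGraph (Fin n)) (hT : T.IsTree) :
    lam T 2 ≤ Real.sqrt (((n : ℝ) - 3) / 2) ∧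
      lam (doubleBroom n) 2 = Real.sqrt (((n : ℝ) - 3) / 2) := by
  obtain ⟨k, rfl⟩ : ∃ k, n = 2 * k + 3 := by
    obtain ⟨m, hm⟩ := hodd
    exact ⟨m - 1, by omega⟩
  rw [show ((2 * k + 3 : ℕ) - 3 : ℝ) / 2 = k by push_cast; ring]
  refine ⟨?_, le_antisymm (lam_two_doubleBroom_le k (by omega)) (le_lam_two_doubleBroom k (by omega))⟩
  simpa [show (2 * k + 3) / 2 - 1 = k by omega] using hT.lam_two_le (by simp)

end
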